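/- Let x₁, x₂ be elements of a complex unital Banach algebra A with x₁x₂ = 0, and suppose x₁ and x₂ are Drazin invertible with indices i(x₁), i(x₂). Then x₁ + x₂ is Drazin invertible and (x₁+x₂)^d = Σ_{n=1}^{i(x₂)} (1 − x₂x₂^d) x₂^{n−1} (x₁^d)^n + Σ_{n=1}^{i(x₁)} (x₂^d)^n x₁^{n−1} (1 − x₁x₁^d). -/

import Mathlib

/-!
Write `s = a + b`, let `X` be the proposed inverse and `aᵖ = 1 - a aᵈ`, `bᵖ = 1 - b bᵈ`.
From `a b = 0` one gets `a bᵈ = 0` and `aᵈ b = 0`, hence `a X = a aᵈ` and `X b = b bᵈ`; these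
give `X s X = X`. Commutation `s X = X s` comes from shifting the index in each of the two sums,
whose last terms vanish because `bᵖ b^k₂ = 0` and `a^k₁ aᵖ = 0`. For nilpotency, the idempotent
`e = 1 - s X` satisfies `a e = a aᵖ` and `e b = bᵖ b`, so `a^(k₁+1) e = 0 = e b^(k₂+1)`; since
`a b = 0`, every word in the expansion of `s^(k₁+k₂+2)` is `b^i a^j` with `i > k₂` or `j > k₁`,
so `e s^(k₁+k₂+2) e = 0`.
-/

open scoped ENNReal

/-- `b` is a Drazin inverse of `a`. -/
def IsDrazinInverse {A : Type*} [Ring A] (a b : A) : Prop :=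
  a * b = b * a ∧ b * a * b = b ∧ ∃ n : ℕ, (a * (1 - a * b)) ^ n = 0

/-- `b` is the Drazin inverse of `a` with Drazin index `k`, i.e. `k` is the least `n`
with `(a * (1 - a * b)) ^ n = 0`. -/
def IsDrazinInverseIdx {A : Type*} [Ring A] (a b : A) (k : ℕ) : Prop :=
  a * b = b * a ∧ b * a * b = b ∧ (a * (1 - a * b)) ^ k = 0 ∧
    ∀ m : ℕ, (a * (1 - a * b)) ^ m = 0 → k ≤ m

open Finset

theorem Finset.sum_Icc_one_eq_sum_range {M : Type*} [AddCommMonoid M] (f : ℕ → M) (k : ℕ) :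
    ∑ n ∈ Icc 1 k, f n = ∑ i ∈ range k, f (i + 1) := by
  induction k with
  | zero => simp
  | succ k ih => rw [sum_Icc_succ_top (by omega), ih, sum_range_succ]

section Ring

variable {A : Type*} [Ring A]

theorem add_pow_mul_of_mul_eq_zero {a b : A} (hab : a * b = 0) (n : ℕ) :
    (a + b) ^ n * b = b ^ (n + 1) := by
  induction n with
  | zero => simp
  | succ n ih => rw [pow_succ, mul_assoc, add_mul, hab, zero_add, ← mul_assoc, ih, ← pow_succ]

theorem mul_add_pow_mul_eq_zero_of_mul_eq_zero {a b x y : A} (hab : a * b = 0) {M N : ℕ}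
    (ha : a ^ M * y = 0) (hb : x * b ^ N = 0) : x * (a + b) ^ (M + N) * y = 0 := by
  induction M generalizing y with
  | zero => rw [pow_zero, one_mul] at ha; rw [ha, mul_zero]
  | succ M ih =>
    have hay : a ^ M * (a * y) = 0 := by rw [← mul_assoc, ← pow_succ, ha]
    have hby : (a + b) ^ (M + N) * (b * y) = b ^ N * (b ^ (M + 1) * y) := by
      rw [← mul_assoc, add_pow_mul_of_mul_eq_zero hab, ← mul_assoc, ← pow_add,
        show N + (M + 1) = M + N + 1 by omega]
    calc x * (a + b) ^ (M + 1 + N) * y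
        = x * (a + b) ^ (M + N) * (a * y) + x * ((a + b) ^ (M + N) * (b * y)) := by
          rw [Nat.add_right_comm, pow_succ]; noncomm_ring
      _ = 0 := by rw [ih hay, hby, ← mul_assoc, hb, zero_mul, add_zero]

theorem IsIdempotentElem.pow_mul_eq_zero {x e : A} (he : IsIdempotentElem e) (hc : Commute x e)
    {k : ℕ} (h : (x * e) ^ k = 0) : x ^ k * e = 0 := by
  rw [← he.pow_succ_eq k, pow_succ, ← mul_assoc, ← hc.mul_pow, h, zero_mul]

theorem IsIdempotentElem.mul_pow_eq_zero {x e : A} (he : IsIdempotentElem e) (hc : Commute x e)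
    {k : ℕ} (h : (x * e) ^ k = 0) : e * x ^ k = 0 := by
  rw [← (hc.pow_left k).eq, he.pow_mul_eq_zero hc h]

theorem commute_one_sub_mul_of_commute {a ad : A} (hc : a * ad = ad * a) :
    Commute a (1 - a * ad) :=
  (Commute.one_right a).sub_right ((Commute.refl a).mul_right hc)

theorem isDrazinInverse_of_corner_pow_eq_zero {s x : A} (hc : s * x = x * s) (hi : x * s * x = x)
    {n : ℕ} (hn : n ≠ 0) (h : (1 - s * x) * s ^ n * (1 - s * x) = 0) : IsDrazinInverse s x := by
  have he : IsIdempotentElem (1 - s * x) := by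
    refine IsIdempotentElem.one_sub ?_
    rw [IsIdempotentElem, mul_assoc, ← mul_assoc x, hi]
  have hse : Commute s (1 - s * x) := commute_one_sub_mul_of_commute hc
  refine ⟨hc, hi, n, ?_⟩
  rw [hse.mul_pow, he.pow_eq hn, ← he.eq, ← mul_assoc, (hse.pow_left n).eq, h]

variable {a b ad bd : A}


theorem isIdempotentElem_mul_of_drazin (hi : ad * a * ad = ad) : IsIdempotentElem (a * ad) := by
  rw [IsIdempotentElem, mul_assoc, ← mul_assoc ad, hi]

theorem pow_succ_mul_mul_of_drazin (hi : ad * a * ad = ad) (i : ℕ) :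
    ad ^ (i + 1) * (a * ad) = ad ^ (i + 1) := by
  rw [pow_succ, mul_assoc, ← mul_assoc ad, hi]

theorem pow_succ_succ_mul_of_drazin (hc : a * ad = ad * a) (hi : ad * a * ad = ad) (i : ℕ) :
    ad ^ (i + 2) * a = ad ^ (i + 1) := by
  rw [pow_succ, mul_assoc, ← hc, pow_succ_mul_mul_of_drazin hi]

theorem mul_mul_pow_succ_of_drazin (hc : a * ad = ad * a) (hi : ad * a * ad = ad) (i : ℕ) :
    a * ad * ad ^ (i + 1) = ad ^ (i + 1) := by
  rw [pow_succ', ← mul_assoc, hc, hi]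

theorem mul_drazin_eq_zero (hab : a * b = 0) (hc : b * bd = bd * b) (hi : bd * b * bd = bd) :
    a * bd = 0 := by
  rw [← hi, ← hc, mul_assoc b, ← mul_assoc, hab, zero_mul]

theorem drazin_mul_eq_zero (hab : a * b = 0) (hc : a * ad = ad * a) (hi : ad * a * ad = ad) :
    ad * b = 0 := by
  rw [← hi, mul_assoc ad a, hc, ← mul_assoc, mul_assoc, hab, mul_zero]

def drazinSumLeft (b bd ad : A) (N : ℕ) : A :=
  ∑ i ∈ range N, (1 - b * bd) * b ^ i * ad ^ (i + 1)

def drazinSumRight (a ad bd : A) (N : ℕ) : A :=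
  ∑ i ∈ range N, bd ^ (i + 1) * a ^ i * (1 - a * ad)

theorem mul_drazinSumLeft (hab : a * b = 0) {N : ℕ} (hN : N ≠ 0) :
    a * drazinSumLeft b bd ad N = a * ad := by
  obtain ⟨n, rfl⟩ := Nat.exists_eq_add_one_of_ne_zero hN
  have haq : a * (1 - b * bd) = a := by
    rw [mul_sub, mul_one, ← mul_assoc, hab, zero_mul, sub_zero]
  rw [drazinSumLeft, mul_sum, sum_range_succ', sum_eq_zero, zero_add]
  · rw [pow_zero, mul_one, zero_add, pow_one, ← mul_assoc, haq]
  · intro i _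
    rw [← mul_assoc, ← mul_assoc, haq, pow_succ', ← mul_assoc, hab, zero_mul, zero_mul]

theorem mul_drazinSumRight (habd : a * bd = 0) (N : ℕ) : a * drazinSumRight a ad bd N = 0 := by
  refine (mul_sum _ _ _).trans (sum_eq_zero fun i _ => ?_)
  rw [pow_succ', mul_assoc bd, mul_assoc bd, ← mul_assoc a, habd, zero_mul]

theorem drazinSumLeft_mul_mul (hi : ad * a * ad = ad) (N : ℕ) :
    drazinSumLeft b bd ad N * (a * ad) = drazinSumLeft b bd ad N := by
  refine (sum_mul _ _ _).trans (sum_congr rfl fun i _ => ?_)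
  rw [mul_assoc, pow_succ_mul_mul_of_drazin hi]

theorem drazinSumRight_mul_mul (hi : ad * a * ad = ad) (N : ℕ) :
    drazinSumRight a ad bd N * (a * ad) = 0 := by
  refine (sum_mul _ _ _).trans (sum_eq_zero fun i _ => ?_)
  rw [mul_assoc, (isIdempotentElem_mul_of_drazin hi).one_sub_mul_self, mul_zero]

theorem drazinSumLeft_mul (hadb : ad * b = 0) (N : ℕ) : drazinSumLeft b bd ad N * b = 0 := by
  refine (sum_mul _ _ _).trans (sum_eq_zero fun i _ => ?_)
  rw [mul_assoc, pow_succ, mul_assoc (ad ^ i), hadb, mul_zero, mul_zero]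

theorem drazinSumRight_mul (hab : a * b = 0) (hadb : ad * b = 0) (hc : b * bd = bd * b)
    {N : ℕ} (hN : N ≠ 0) : drazinSumRight a ad bd N * b = b * bd := by
  obtain ⟨n, rfl⟩ := Nat.exists_eq_add_one_of_ne_zero hN
  have hpb : (1 - a * ad) * b = b := by rw [sub_mul, one_mul, mul_assoc, hadb, mul_zero, sub_zero]
  rw [drazinSumRight, sum_mul, sum_range_succ', sum_eq_zero, zero_add]
  · rw [zero_add, pow_one, pow_zero, mul_one, mul_assoc, hpb, hc]
  · intro i _
    rw [mul_assoc, hpb, mul_assoc, pow_succ a, mul_assoc (a ^ i), hab, mul_zero, mul_zero]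

theorem mul_mul_drazinSumLeft (hi : bd * b * bd = bd) (N : ℕ) :
    b * bd * drazinSumLeft b bd ad N = 0 := by
  refine (mul_sum _ _ _).trans (sum_eq_zero fun i _ => ?_)
  rw [← mul_assoc, ← mul_assoc, (isIdempotentElem_mul_of_drazin hi).mul_one_sub_self,
    zero_mul, zero_mul]

theorem mul_mul_drazinSumRight (hc : b * bd = bd * b) (hi : bd * b * bd = bd) (N : ℕ) :
    b * bd * drazinSumRight a ad bd N = drazinSumRight a ad bd N := by
  refine (mul_sum _ _ _).trans (sum_congr rfl fun i _ => ?_)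
  rw [← mul_assoc, ← mul_assoc, mul_mul_pow_succ_of_drazin hc hi]

theorem drazinSumLeft_mul_eq_mul_drazinSumLeft_add (hc : a * ad = ad * a) (hi : ad * a * ad = ad)
    (hbc : b * bd = bd * b) {N : ℕ} (hN : N ≠ 0) (hb : (1 - b * bd) * b ^ N = 0) :
    drazinSumLeft b bd ad N * a = b * drazinSumLeft b bd ad N + (1 - b * bd) * (a * ad) := by
  obtain ⟨n, rfl⟩ := Nat.exists_eq_add_one_of_ne_zero hN
  have hbq := commute_one_sub_mul_of_commute hbc
  rw [drazinSumLeft, sum_mul, mul_sum, sum_range_succ', sum_range_succ, ← mul_assoc b,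
    ← mul_assoc b, hbq.eq, mul_assoc _ b, ← pow_succ', hb, zero_mul, add_zero]
  congr 1
  · refine sum_congr rfl fun i _ => ?_
    rw [mul_assoc, pow_succ_succ_mul_of_drazin hc hi, ← mul_assoc b, ← mul_assoc b, hbq.eq,
      mul_assoc _ b, ← pow_succ']
  · rw [pow_zero, mul_one, zero_add, pow_one, mul_assoc, hc]

theorem drazinSumRight_mul_add_eq_mul_drazinSumRight (hc : a * ad = ad * a) (hbc : b * bd = bd * b)
    (hbi : bd * b * bd = bd) {N : ℕ} (hN : N ≠ 0) (ha : a ^ N * (1 - a * ad) = 0) :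
    drazinSumRight a ad bd N * a + b * bd * (1 - a * ad) = b * drazinSumRight a ad bd N := by
  obtain ⟨n, rfl⟩ := Nat.exists_eq_add_one_of_ne_zero hN
  have hap := commute_one_sub_mul_of_commute hc
  rw [drazinSumRight, sum_mul, mul_sum, sum_range_succ, sum_range_succ', mul_assoc _ _ a,
    ← hap.eq, ← mul_assoc _ a, mul_assoc _ _ a, ← pow_succ, mul_assoc, ha, mul_zero, add_zero]
  congr 1
  · refine sum_congr rfl fun i _ => ?_
    rw [mul_assoc _ _ a, ← hap.eq, ← mul_assoc _ a, mul_assoc _ _ a, ← pow_succ,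
      ← mul_assoc b, ← mul_assoc b, pow_succ' bd (i + 1), ← mul_assoc b,
      mul_mul_pow_succ_of_drazin hbc hbi]
  · rw [pow_zero, mul_one, zero_add, pow_one, ← mul_assoc]

theorem isDrazinInverse_add_of_mul_eq_zero (hab : a * b = 0) (hac : a * ad = ad * a)
    (hai : ad * a * ad = ad) (hbc : b * bd = bd * b) (hbi : bd * b * bd = bd) {N₁ N₂ : ℕ}
    (hN₁ : N₁ ≠ 0) (hN₂ : N₂ ≠ 0) (ha : a ^ N₁ * (1 - a * ad) = 0)
    (hb : (1 - b * bd) * b ^ N₂ = 0) :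
    IsDrazinInverse (a + b) (drazinSumLeft b bd ad N₂ + drazinSumRight a ad bd N₁) := by
  have habd := mul_drazin_eq_zero hab hbc hbi
  have hadb := drazin_mul_eq_zero hab hac hai
  set u := drazinSumLeft b bd ad N₂
  set v := drazinSumRight a ad bd N₁
  have haX : a * (u + v) = a * ad := by
    rw [mul_add, mul_drazinSumLeft hab hN₂, mul_drazinSumRight habd, add_zero]
  have hXb : (u + v) * b = b * bd := by
    rw [add_mul, drazinSumLeft_mul hadb, drazinSumRight_mul hab hadb hbc hN₁, zero_add]
  have hsX : (a + b) * (u + v) = a * ad + b * (u + v) := by rw [add_mul, haX]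
  have hcomm : (a + b) * (u + v) = (u + v) * (a + b) := by
    rw [hsX, mul_add (u + v), hXb, add_mul u v a,
      drazinSumLeft_mul_eq_mul_drazinSumLeft_add hac hai hbc hN₂ hb,
      eq_sub_of_add_eq (drazinSumRight_mul_add_eq_mul_drazinSumRight hac hbc hbi hN₁ ha)]
    noncomm_ring
  have hXsX : (u + v) * (a + b) * (u + v) = u + v := by
    rw [mul_assoc, hsX, mul_add, ← mul_assoc _ b, hXb, add_mul u v, drazinSumLeft_mul_mul hai,
      drazinSumRight_mul_mul hai, add_zero, mul_add (b * bd), mul_mul_drazinSumLeft hbi,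
      mul_mul_drazinSumRight hbc hbi, zero_add]
  refine isDrazinInverse_of_corner_pow_eq_zero hcomm hXsX (n := N₁ + 1 + (N₂ + 1)) (by omega)
    (mul_add_pow_mul_eq_zero_of_mul_eq_zero hab ?_ ?_)
  · have hae : a * (1 - (a + b) * (u + v)) = a * (1 - a * ad) := by
      rw [mul_sub, mul_sub, ← mul_assoc a (a + b), mul_add a a b, hab, add_zero, mul_assoc a a,
        haX]
    rw [pow_succ, mul_assoc, hae, ← mul_assoc, ← pow_succ, pow_succ', mul_assoc, ha, mul_zero]
  · have heb : (1 - (a + b) * (u + v)) * b = (1 - b * bd) * b := by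
      rw [hcomm, sub_mul, sub_mul, mul_assoc (u + v), add_mul a b, hab, zero_add, ← mul_assoc,
        hXb]
    rw [pow_succ', ← mul_assoc, heb, mul_assoc, ← pow_succ', pow_succ, ← mul_assoc, hb,
      zero_mul]

end Ring

theorem stmt_18_general {A : Type*} [NormedRing A]
    (x₁ x₂ b₁ b₂ : A) (k₁ k₂ : ℕ) (h12 : x₁ * x₂ = 0)
    (h1 : IsDrazinInverseIdx x₁ b₁ k₁) (h2 : IsDrazinInverseIdx x₂ b₂ k₂) :
    IsDrazinInverse (x₁ + x₂)
      ((∑ n ∈ Finset.Icc 1 k₂, (1 - x₂ * b₂) * x₂ ^ (n - 1) * b₁ ^ n) +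
        ∑ n ∈ Finset.Icc 1 k₁, b₂ ^ n * x₁ ^ (n - 1) * (1 - x₁ * b₁)) := by
  obtain ⟨h1c, h1i, h1n, -⟩ := h1
  obtain ⟨h2c, h2i, h2n, -⟩ := h2
  rcases subsingleton_or_nontrivial A with hA | hA
  · exact ⟨Subsingleton.elim _ _, Subsingleton.elim _ _, 0, Subsingleton.elim _ _⟩
  have hk₁ : k₁ ≠ 0 := by rintro rfl; simp at h1n
  have hk₂ : k₂ ≠ 0 := by rintro rfl; simp at h2n
  have hp₁ := (isIdempotentElem_mul_of_drazin h1i).one_sub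
  have hp₂ := (isIdempotentElem_mul_of_drazin h2i).one_sub
  have ha := hp₁.pow_mul_eq_zero (commute_one_sub_mul_of_commute h1c) h1n
  have hb := hp₂.mul_pow_eq_zero (commute_one_sub_mul_of_commute h2c) h2n
  simp only [sum_Icc_one_eq_sum_range, Nat.add_sub_cancel]
  exact isDrazinInverse_add_of_mul_eq_zero h12 h1c h1i h2c h2i hk₁ hk₂ ha hb

theorem stmt_18 {A : Type*} [NormedRing A] [NormedAlgebra ℂ A] [CompleteSpace A]
    (x₁ x₂ b₁ b₂ : A) (k₁ k₂ : ℕ) (h12 : x₁ * x₂ = 0)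
    (h1 : IsDrazinInverseIdx x₁ b₁ k₁) (h2 : IsDrazinInverseIdx x₂ b₂ k₂) :
    IsDrazinInverse (x₁ + x₂)
      ((∑ n ∈ Finset.Icc 1 k₂, (1 - x₂ * b₂) * x₂ ^ (n - 1) * b₁ ^ n) +
        ∑ n ∈ Finset.Icc 1 k₁, b₂ ^ n * x₁ ^ (n - 1) * (1 - x₁ * b₁)) :=
  stmt_18_general x₁ x₂ b₁ b₂ k₁ k₂ h12 h1 h2
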